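/- Let μ > 0, M ∈ ℝ, and let A_M be the diffusion wave. Then for all ξ ∈ ℝ, μ A_M'''(ξ) + (1/2) d/dξ(ξ A_M'(ξ)) − d/dξ(A_M(ξ) A_M'(ξ)) = −(1/2) A_M'(ξ); that is, A_M' is an eigenfunction of the linearization A_μ^M of the rescaled Burgers equation about A_M, with eigenvalue −1/2. -/

import Mathlib

/-!
The diffusion wave solves the Riccati equation `2μ A' = A² − ξ A`, which is the profile equation
`μ A'' + ½ (ξ A)' − (A A')' = 0` integrated once. Differentiating it twice gives
`2μ A''' = 2 A'² + 2 A A'' − 2 A' − ξ A''`, and substituting this turns the eigenvalue identity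
into an algebraic one. Conceptually, the identity is the `ξ`-derivative of the profile equation,
and the eigenvalue `−½` comes from `(ξ A)'' = (ξ A')' + A'`.
-/

open MeasureTheory

/-- The diffusion wave `A_M` with viscosity `μ` and mass `M`:
`A_M(ξ) = α₀ e^{−ξ²/(4μ)} / (1 − (α₀/(2μ)) ∫_{−∞}^ξ e^{−η²/(4μ)} dη)` with
`α₀ = √(μ/π)(1 − e^{−M/(2μ)})`. -/
noncomputable def AM (μ M ξ : ℝ) : ℝ :=
  Real.sqrt (μ / Real.pi) * (1 - Real.exp (-M / (2 * μ))) * Real.exp (-ξ ^ 2 / (4 * μ)) /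
    (1 - Real.sqrt (μ / Real.pi) * (1 - Real.exp (-M / (2 * μ))) / (2 * μ) *
      ∫ η in Set.Iio ξ, Real.exp (-η ^ 2 / (4 * μ)))

open Real Set

section Riccati

variable {μ : ℝ} {A : ℝ → ℝ}

theorem deriv_eq_of_riccati (hA : ∀ x, HasDerivAt A ((A x ^ 2 - x * A x) / (2 * μ)) x) :
    deriv A = fun x => (A x ^ 2 - x * A x) / (2 * μ) :=
  funext fun x => (hA x).deriv

theorem hasDerivAt_deriv_of_riccati (hA : ∀ x, HasDerivAt A ((A x ^ 2 - x * A x) / (2 * μ)) x)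
    (x : ℝ) :
    HasDerivAt (deriv A) ((2 * A x * deriv A x - A x - x * deriv A x) / (2 * μ)) x := by
  rw [deriv_eq_of_riccati hA]
  refine (((hA x).fun_pow 2).fun_sub ((hasDerivAt_id' x).fun_mul (hA x))).div_const (2 * μ)
    |>.congr_deriv ?_
  beta_reduce
  push_cast
  ring

theorem hasDerivAt_deriv_deriv_of_riccati
    (hA : ∀ x, HasDerivAt A ((A x ^ 2 - x * A x) / (2 * μ)) x) (x : ℝ) :
    HasDerivAt (deriv (deriv A))
      ((2 * deriv A x ^ 2 + 2 * A x * deriv (deriv A) x - 2 * deriv A x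
        - x * deriv (deriv A) x) / (2 * μ)) x := by
  have hA' : ∀ x, HasDerivAt A (deriv A x) x := fun x => (hA x).differentiableAt.hasDerivAt
  have hA'' := hasDerivAt_deriv_of_riccati hA
  rw [show deriv (deriv A) = _ from funext fun x => (hA'' x).deriv]
  refine ((((hA' x).const_mul 2).fun_mul (hA'' x)).fun_sub (hA' x)).fun_sub
    ((hasDerivAt_id' x).fun_mul (hA'' x)) |>.div_const (2 * μ) |>.congr_deriv ?_
  ring

theorem linearization_deriv_of_riccati (hμ : μ ≠ 0)
    (hA : ∀ x, HasDerivAt A ((A x ^ 2 - x * A x) / (2 * μ)) x) (ξ : ℝ) :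
    μ * deriv (deriv (deriv A)) ξ + 1 / 2 * deriv (fun x => x * deriv A x) ξ
        - deriv (fun x => A x * deriv A x) ξ = -(1 / 2) * deriv A ξ := by
  have hA' : HasDerivAt A (deriv A ξ) ξ := (hA ξ).differentiableAt.hasDerivAt
  have hA'' : HasDerivAt (deriv A) (deriv (deriv A) ξ) ξ :=
    (hasDerivAt_deriv_of_riccati hA ξ).differentiableAt.hasDerivAt
  rw [(hasDerivAt_deriv_deriv_of_riccati hA ξ).deriv, ((hasDerivAt_id' ξ).fun_mul hA'').deriv,
    (hA'.fun_mul hA'').deriv]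
  field_simp
  ring

end Riccati

theorem hasDerivAt_integral_Iio {E : Type*} [NormedAddCommGroup E] [NormedSpace ℝ E]
    [CompleteSpace E] {f : ℝ → E} (hf : Integrable f) (hcont : Continuous f) (ξ : ℝ) :
    HasDerivAt (fun x => ∫ η in Iio x, f η) (f ξ) ξ := by
  have hsplit : (fun x => ∫ η in Iio x, f η)
      = fun x => (∫ η in Iic 0, f η) + ∫ η in (0 : ℝ)..x, f η := by
    funext x
    rw [← integral_Iic_eq_integral_Iio,
      ← intervalIntegral.integral_Iic_sub_Iic hf.integrableOn hf.integrableOn]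
    abel
  rw [hsplit]
  exact (intervalIntegral.integral_hasDerivAt_right hf.intervalIntegrable
    (hcont.stronglyMeasurableAtFilter _ _) hcont.continuousAt).const_add _

section DiffusionWave

variable {μ : ℝ}

theorem integrable_exp_neg_sq_div (hμ : 0 < μ) :
    Integrable fun x : ℝ => exp (-x ^ 2 / (4 * μ)) := by
  convert integrable_exp_neg_mul_sq (b := 1 / (4 * μ)) (by positivity) using 3
  ring

theorem integral_exp_neg_sq_div (hμ : 0 < μ) :
    ∫ x : ℝ, exp (-x ^ 2 / (4 * μ)) = √(4 * μ * π) := by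
  convert integral_gaussian (1 / (4 * μ)) using 4
  · ring
  · field_simp

theorem sqrt_div_pi_mul_integral_exp_neg_sq_div (hμ : 0 < μ) :
    √(μ / π) / (2 * μ) * ∫ x : ℝ, exp (-x ^ 2 / (4 * μ)) = 1 := by
  have hsq : μ / π * (4 * μ * π) = (2 * μ) ^ 2 := by field_simp; ring
  rw [integral_exp_neg_sq_div hμ, div_mul_eq_mul_div, ← sqrt_mul (by positivity), hsq,
    sqrt_sq (by positivity), div_self (by positivity)]

/-- The denominator of `AM` is `(1 − θ) + θ e^{−M/(2μ)}` with `θ ∈ [0, 1]` the normalised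
Gaussian mass of `(−∞, ξ)`. -/
theorem AM_denom_pos (hμ : 0 < μ) (M ξ : ℝ) :
    0 < 1 - √(μ / π) * (1 - exp (-M / (2 * μ))) / (2 * μ) *
      ∫ η in Iio ξ, exp (-η ^ 2 / (4 * μ)) := by
  set θ := √(μ / π) / (2 * μ) * ∫ η in Iio ξ, exp (-η ^ 2 / (4 * μ))
  have hθ0 : 0 ≤ θ :=
    mul_nonneg (by positivity) (setIntegral_nonneg measurableSet_Iio fun x _ => (exp_pos _).le)
  have hθ1 : θ ≤ 1 := by
    rw [← sqrt_div_pi_mul_integral_exp_neg_sq_div hμ]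
    exact mul_le_mul_of_nonneg_left
      (setIntegral_le_integral (integrable_exp_neg_sq_div hμ) (.of_forall fun x => (exp_pos _).le)) (by positivity)
  have hexp := exp_pos (-M / (2 * μ))
  have hconvex : 0 < (1 - θ) + θ * exp (-M / (2 * μ)) := by
    rcases le_total (exp (-M / (2 * μ))) 1 with h | h <;> nlinarith
  convert hconvex using 1
  ring

theorem hasDerivAt_AM (hμ : 0 < μ) (M ξ : ℝ) :
    HasDerivAt (AM μ M) ((AM μ M ξ ^ 2 - ξ * AM μ M ξ) / (2 * μ)) ξ := by
  set a := √(μ / π) * (1 - exp (-M / (2 * μ)))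
  set g := fun x : ℝ => exp (-x ^ 2 / (4 * μ))
  set D := fun x => 1 - a / (2 * μ) * ∫ η in Iio x, g η
  have hg : HasDerivAt g (-ξ / (2 * μ) * g ξ) ξ := by
    refine (((hasDerivAt_pow 2 ξ).fun_neg).div_const (4 * μ)).exp.congr_deriv ?_
    simp only [g]
    field_simp
    ring
  have hD : HasDerivAt D (-(a / (2 * μ) * g ξ)) ξ :=
    ((hasDerivAt_integral_Iio (integrable_exp_neg_sq_div hμ) (by fun_prop) ξ).const_mul
      (a / (2 * μ))).const_sub 1
  have hDξ : D ξ ≠ 0 := (AM_denom_pos hμ M ξ).ne'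
  have hAM : AM μ M = fun x => a * g x / D x := rfl
  rw [hAM]
  refine ((hg.const_mul a).fun_div hD hDξ).congr_deriv ?_
  beta_reduce
  field_simp
  ring

end DiffusionWave

/-- `A_M'` is an eigenfunction of the linearization `A_μ^M` of the rescaled
Burgers equation about `A_M`, with eigenvalue `−1/2`:
`μ A_M''' + (1/2)(ξ A_M')' − (A_M A_M')' = −(1/2) A_M'`. -/
theorem stmt8 (μ M : ℝ) (hμ : 0 < μ) :
    ∀ ξ : ℝ,
      μ * deriv (deriv (deriv (AM μ M))) ξ
          + 1 / 2 * deriv (fun x => x * deriv (AM μ M) x) ξ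
          - deriv (fun x => AM μ M x * deriv (AM μ M) x) ξ
        = -(1 / 2) * deriv (AM μ M) ξ :=
  linearization_deriv_of_riccati hμ.ne' (hasDerivAt_AM hμ M)
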